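/- The image of α_{λ;n} under the forgetful homomorphism For_n : B_n → ℚ[S_n] equals binom(n−|λ|+m_1(λ), m_1(λ)) · C_{λ1^{n−|λ|}}, where m_1(λ) is the number of parts of λ equal to 1 and C_μ denotes the sum in ℚ[S_n] of all permutations of cycle type μ. -/

import Mathlib

abbrev PPn (n : ℕ) : Type := {p : Equiv.Perm (Fin n) × Finset (Fin n) // ∀ x ∉ p.2, p.1 x = x}

instance (n : ℕ) : Monoid (PPn n) where
  mul p q := ⟨(p.1.1 * q.1.1, p.1.2 ∪ q.1.2), by
    intro x hx
    simp only [Finset.mem_union, not_or] at hx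
    simp [Equiv.Perm.mul_apply, q.2 x hx.2, p.2 x hx.1]⟩
  one := ⟨(1, ∅), fun x _ => rfl⟩
  mul_assoc p q r := Subtype.ext (Prod.ext (mul_assoc _ _ _) (Finset.union_assoc _ _ _))
  one_mul p := Subtype.ext (Prod.ext (one_mul _) (Finset.empty_union _))
  mul_one p := Subtype.ext (Prod.ext (mul_one _) (Finset.union_empty _))

abbrev Bn (n : ℕ) : Type := MonoidAlgebra ℚ (PPn n)

def ppSwap {n : ℕ} (j i : Fin n) : PPn n := ⟨(Equiv.swap j i, {j, i}), by
  intro x hx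
  simp only [Finset.mem_insert, Finset.mem_singleton, not_or] at hx
  exact Equiv.swap_apply_of_ne_of_ne hx.1 hx.2⟩

noncomputable def xi (n : ℕ) (i : Fin n) : Bn n :=
  ∑ j ∈ Finset.univ.filter (· < i), MonoidAlgebra.of ℚ (PPn n) (ppSwap j i)

/-- The action of `τ ∈ S_n` on partial permutations: `τ·(σ,d) = (τστ⁻¹, τ(d))`. -/
def conjPP {n : ℕ} (τ : Equiv.Perm (Fin n)) (p : PPn n) : PPn n :=
  ⟨(τ * p.1.1 * τ⁻¹, p.1.2.image τ), by
    intro x hx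
    have hx' : τ⁻¹ x ∉ p.1.2 := fun h => hx (Finset.mem_image.mpr ⟨_, h, by simp⟩)
    show τ (p.1.1 (τ⁻¹ x)) = x
    rw [p.2 _ hx']
    simp⟩

/-- The cycle type of a partial permutation `(σ,d)`, as a partition of `|d|`
(fixed points of `σ` inside `d` contribute parts equal to `1`). -/
def typePP {n : ℕ} (p : PPn n) : Multiset ℕ :=
  p.1.1.cycleType + Multiset.replicate (p.1.2.card - p.1.1.support.card) 1

/-- The invariant element `α_{λ;n}`. -/
noncomputable def alphaM (n : ℕ) (m : Multiset ℕ) : Bn n :=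
  ∑ p : PPn n, if typePP p = m then MonoidAlgebra.of ℚ (PPn n) p else 0

/-- The projection `(σ,d) ↦ σ`, as a monoid homomorphism. -/
def projHom (n : ℕ) : PPn n →* Equiv.Perm (Fin n) where
  toFun p := p.1.1
  map_one' := rfl
  map_mul' _ _ := rfl

/-- The forgetful algebra homomorphism `For_n : B_n → ℚ[S_n]`. -/
noncomputable def Forn (n : ℕ) : Bn n →ₐ[ℚ] MonoidAlgebra ℚ (Equiv.Perm (Fin n)) :=
  MonoidAlgebra.lift ℚ (MonoidAlgebra ℚ (Equiv.Perm (Fin n))) (PPn n)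
    ((MonoidAlgebra.of ℚ (Equiv.Perm (Fin n))).comp (projHom n))

/-- The cycle type of `σ ∈ S_n` as a partition of `n` (including parts `1` for fixed points). -/
def fullType {n : ℕ} (σ : Equiv.Perm (Fin n)) : Multiset ℕ :=
  σ.cycleType + Multiset.replicate (n - σ.support.card) 1

/-- The class sum `C_μ`: sum of all permutations of cycle type `μ` in `ℚ[S_n]`. -/
noncomputable def Csum (n : ℕ) (m : Multiset ℕ) : MonoidAlgebra ℚ (Equiv.Perm (Fin n)) :=
  ∑ σ : Equiv.Perm (Fin n),
    if fullType σ = m then MonoidAlgebra.of ℚ (Equiv.Perm (Fin n)) σ else 0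

/-!
For `(σ, d)` with `supp σ ⊆ d`, the type of `(σ, d)` is the cycle type of `σ` with `|d| - |supp σ|`
fixed points recorded, so padding it with `n - |d|` ones gives `fullType σ`. Hence `(σ, d)` has type
`λ` exactly when `|d| = |λ|` and `σ` has type `λ 1^{n-|λ|}`, and `For_n(α_{λ;n})` picks up `σ` once
for every `d ⊇ supp σ` of size `|λ|`. There are `binom(n - |supp σ|, |λ| - |supp σ|)` of them, and
counting the parts `1` of `fullType σ` turns this into `binom(n - |λ| + m₁(λ), m₁(λ))`.
-/

open Finset

namespace Equiv.Perm

variable {α : Type*} [Fintype α] [DecidableEq α]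

theorem support_subset_iff {σ : Perm α} {s : Finset α} : σ.support ⊆ s ↔ ∀ x ∉ s, σ x = x := by
  simp only [subset_iff, mem_support]
  exact forall_congr' fun x => not_imp_comm

theorem count_one_cycleType (σ : Perm α) : σ.cycleType.count 1 = 0 :=
  Multiset.count_eq_zero.mpr fun h => lt_irrefl 1 (one_lt_of_mem_cycleType h)

end Equiv.Perm

theorem Finset.card_filter_superset_card_eq {α : Type*} [Fintype α] [DecidableEq α] {k : ℕ}
    (s : Finset α) (hs : #s ≤ k) :
    #{t | s ⊆ t ∧ #t = k} = (Fintype.card α - #s).choose (k - #s) := by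
  rw [← card_compl, ← card_powersetCard]
  refine card_nbij' (· \ s) (s ∪ ·) ?_ ?_ ?_ ?_
  · intro t ht
    simp only [mem_coe, mem_filter_univ, mem_powersetCard] at ht ⊢
    rw [card_sdiff_of_subset ht.1, ht.2]
    exact ⟨fun x hx => mem_compl.mpr (mem_sdiff.mp hx).2, rfl⟩
  · intro u hu
    simp only [mem_coe, mem_powersetCard, subset_compl_iff_disjoint_left] at hu
    simp only [mem_coe, mem_filter_univ, card_union_of_disjoint hu.1, hu.2]
    exact ⟨subset_union_left, by omega⟩
  · intro t ht
    simp only [mem_coe, mem_filter_univ] at ht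
    exact union_sdiff_of_subset ht.1
  · intro u hu
    simp only [mem_coe, mem_powersetCard, subset_compl_iff_disjoint_left] at hu
    exact union_sdiff_cancel_left hu.1

variable {n : ℕ}

theorem fullType_eq_parts (σ : Equiv.Perm (Fin n)) : fullType σ = σ.partition.parts := by
  rw [Equiv.Perm.parts_partition, Fintype.card_fin]; rfl

theorem sum_fullType (σ : Equiv.Perm (Fin n)) : (fullType σ).sum = n := by
  rw [fullType_eq_parts, σ.partition.parts_sum, Fintype.card_fin]

theorem count_one_fullType (σ : Equiv.Perm (Fin n)) :
    (fullType σ).count 1 = n - #σ.support := by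
  rw [fullType, Multiset.count_add, σ.count_one_cycleType, Multiset.count_replicate_self, zero_add]

theorem card_support_le_card (p : PPn n) : #p.1.1.support ≤ #p.1.2 :=
  card_le_card (Equiv.Perm.support_subset_iff.mpr p.2)

theorem sum_typePP (p : PPn n) : (typePP p).sum = #p.1.2 := by
  have hsupp := card_support_le_card p
  rw [typePP, Multiset.sum_add, Equiv.Perm.sum_cycleType, Multiset.sum_replicate, smul_eq_mul,
    mul_one]
  omega

theorem fullType_eq_typePP_add (p : PPn n) :
    fullType p.1.1 = typePP p + Multiset.replicate (n - #p.1.2) 1 := by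
  have hsupp := card_support_le_card p
  have hd : #p.1.2 ≤ n := card_le_univ p.1.2 |>.trans_eq (Fintype.card_fin n)
  rw [fullType, typePP, add_assoc, ← Multiset.replicate_add]
  congr 2
  omega

theorem typePP_eq_iff {k : ℕ} {lam : Multiset ℕ} (hsum : lam.sum = k) (p : PPn n) :
    typePP p = lam ↔ fullType p.1.1 = lam + Multiset.replicate (n - k) 1 ∧ #p.1.2 = k := by
  rw [fullType_eq_typePP_add]
  constructor
  · rintro rfl
    have hd : #p.1.2 = k := (sum_typePP p).symm.trans hsum
    exact ⟨by rw [hd], hd⟩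
  · rintro ⟨h, hd⟩
    rw [hd] at h
    exact add_right_cancel h

theorem sum_PPn_eq_sum_support_subset {M : Type*} [AddCommMonoid M] (f : Equiv.Perm (Fin n) × Finset (Fin n) → M) :
    ∑ p : PPn n, f p.1 = ∑ σ, ∑ d with σ.support ⊆ d, f (σ, d) := by
  rw [← sum_subtype (univ.filter fun q : Equiv.Perm (Fin n) × Finset (Fin n) => ∀ x ∉ q.2, q.1 x = x)
    (fun _ => mem_filter_univ _) f]
  refine sum_finset_product _ _ _ fun q => ?_
  simp [Equiv.Perm.support_subset_iff]

theorem card_filter_superset_support_of_fullType_eq {k : ℕ} {lam : Multiset ℕ} (hsum : lam.sum = k)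
    {σ : Equiv.Perm (Fin n)} (hσ : fullType σ = lam + Multiset.replicate (n - k) 1) :
    #{d | σ.support ⊆ d ∧ #d = k} = (n - k + lam.count 1).choose (lam.count 1) := by
  have hkn : k ≤ n := by
    have := congrArg Multiset.sum hσ
    rw [sum_fullType, Multiset.sum_add, hsum] at this
    omega
  have hcount : n - #σ.support = lam.count 1 + (n - k) := by
    rw [← count_one_fullType, hσ, Multiset.count_add, Multiset.count_replicate_self]
  have hsn : #σ.support ≤ n := card_le_univ _ |>.trans_eq (Fintype.card_fin n)
  rw [card_filter_superset_card_eq _ (by omega), Fintype.card_fin]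
  congr 1 <;> omega

theorem sum_superset_support_ite {M : Type*} [AddCommMonoid M] {k : ℕ} {lam : Multiset ℕ}
    (hsum : lam.sum = k) (σ : Equiv.Perm (Fin n)) (x : M) :
    ∑ d with σ.support ⊆ d, (if fullType σ = lam + Multiset.replicate (n - k) 1 ∧ #d = k
        then x else 0)
      = if fullType σ = lam + Multiset.replicate (n - k) 1
        then (n - k + lam.count 1).choose (lam.count 1) • x else 0 := by
  by_cases hσ : fullType σ = lam + Multiset.replicate (n - k) 1
  · simp only [hσ, true_and, if_true]
    rw [← sum_filter, sum_const, filter_filter, card_filter_superset_support_of_fullType_eq hsum hσ]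
  · simp only [hσ, false_and, if_false, sum_const_zero]

theorem Forn_of (p : PPn n) :
    Forn n (MonoidAlgebra.of ℚ (PPn n) p) = MonoidAlgebra.of ℚ (Equiv.Perm (Fin n)) p.1.1 :=
  MonoidAlgebra.lift_of _ p

theorem Forn_alpha_general (n k : ℕ) (lam : Multiset ℕ) (hsum : lam.sum = k) :
    Forn n (alphaM n lam)
      = ((n - k + lam.count 1).choose (lam.count 1) : ℚ)
          • Csum n (lam + Multiset.replicate (n - k) 1) := by
  calc Forn n (alphaM n lam)
      = ∑ p : PPn n, if fullType p.1.1 = lam + Multiset.replicate (n - k) 1 ∧ #p.1.2 = k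
          then MonoidAlgebra.of ℚ _ p.1.1 else 0 := by
        simp only [alphaM, map_sum, apply_ite (Forn n), map_zero, Forn_of, typePP_eq_iff hsum]
    _ = ∑ σ, if fullType σ = lam + Multiset.replicate (n - k) 1
          then (n - k + lam.count 1).choose (lam.count 1) • MonoidAlgebra.of ℚ _ σ else 0 := by
        rw [sum_PPn_eq_sum_support_subset fun q => if fullType q.1 = lam + Multiset.replicate (n - k) 1 ∧ #q.2 = k
          then MonoidAlgebra.of ℚ _ q.1 else 0]
        exact sum_congr rfl fun σ _ => sum_superset_support_ite hsum σ (MonoidAlgebra.of ℚ _ σ)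
    _ = _ := by
        simp only [Csum, smul_sum, smul_ite, smul_zero, Nat.cast_smul_eq_nsmul]

/-- `For_n(α_{λ;n}) = binom(n−|λ|+m₁(λ), m₁(λ)) · C_{λ 1^{n−|λ|}}`. -/
theorem Forn_alpha (n k : ℕ) (hk : k ≤ n) (lam : Multiset ℕ)
    (hpos : ∀ a ∈ lam, 0 < a) (hsum : lam.sum = k) :
    Forn n (alphaM n lam)
      = ((n - k + lam.count 1).choose (lam.count 1) : ℚ)
          • Csum n (lam + Multiset.replicate (n - k) 1) :=
  Forn_alpha_general n k lam hsum
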